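/- arXiv:2402.06674 — 2 statements merged into one kernel-verified Lean document; each statement's English description precedes it below -/
import Mathlib

section
/- Let t be a real random variable on a probability space, let (Z, μ_Z) be a probability space, and let A, B, q : Z → ℝ be integrable with a := ∫|A| dμ_Z > 0, b := ∫|B| dμ_Z, and r := ∫|q| dμ_Z. Then for every c > 0 and β > 0, P( μ_Z({z : A(z)·t + B(z) + q(z) ≥ c}) ≥ β ) ≤ P( |t| ≥ (β·c − b)/a − r/a ). In particular, if the CDF F of |t| is continuous and strictly increasing on [0,∞) and α := 1 − F((β·c − b)/a) ∈ (0,1), then the left-hand side is at most 1 − F( F⁻¹(1 − α) − r/a ). -/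
/-!
If the inner probability is at least `β`, Markov's inequality applied to `|A t + B + q|` gives
`β c ≤ ∫|A t + B + q| ≤ a |t| + b + r`, so the event is contained in `{|t| ≥ (β c - b)/a - r/a}`.
For the second bound, `α < 1` and strict monotonicity of `F` force `u = (β c - b)/a`, and left
continuity of `F` at `w` bounds the tail `P(|t| ≥ w)` by `1 - F w`.
-/

open MeasureTheory

section Markov

variable {Z : Type*} [MeasurableSpace Z] {μ : Measure Z}

lemma mul_measureReal_le_le_integral_abs [IsFiniteMeasure μ] {f : Z → ℝ} (hf : Integrable f μ)
    {c : ℝ} (hc : 0 ≤ c) : c * μ.real {z | c ≤ f z} ≤ ∫ z, |f z| ∂μ :=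
  calc c * μ.real {z | c ≤ f z} ≤ c * μ.real {z | c ≤ |f z|} :=
        mul_le_mul_of_nonneg_left
          (measureReal_mono (fun _ hz => hz.out.trans (le_abs_self _))) hc
    _ ≤ ∫ z, |f z| ∂μ :=
        mul_meas_ge_le_integral_of_nonneg (ae_of_all _ fun _ => abs_nonneg _) hf.abs c

lemma integral_abs_mul_add_add_le {A B q : Z → ℝ} (hA : Integrable A μ) (hB : Integrable B μ)
    (hq : Integrable q μ) (τ : ℝ) :
    ∫ z, |A z * τ + B z + q z| ∂μ ≤
      (∫ z, |A z| ∂μ) * |τ| + ∫ z, |B z| ∂μ + ∫ z, |q z| ∂μ := by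
  have hAτ : Integrable (fun z => |A z| * |τ|) μ := hA.abs.mul_const _
  have hAτB : Integrable (fun z => |A z| * |τ| + |B z|) μ := hAτ.add hB.abs
  calc ∫ z, |A z * τ + B z + q z| ∂μ ≤ ∫ z, (|A z| * |τ| + |B z| + |q z|) ∂μ := by
        refine integral_mono (((hA.mul_const τ).add hB).add hq).abs
          (hAτB.add hq.abs) fun z => ?_
        calc |A z * τ + B z + q z| ≤ |A z * τ| + |B z| + |q z| := abs_add_three _ _ _
          _ = |A z| * |τ| + |B z| + |q z| := by rw [abs_mul]
    _ = (∫ z, |A z| ∂μ) * |τ| + ∫ z, |B z| ∂μ + ∫ z, |q z| ∂μ := by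
        rw [integral_add hAτB hq.abs, integral_add hAτ hB.abs, integral_mul_const]

lemma mul_le_integral_abs_of_le_measureReal [IsFiniteMeasure μ] {A B q : Z → ℝ}
    (hA : Integrable A μ) (hB : Integrable B μ) (hq : Integrable q μ) {c β τ : ℝ} (hc : 0 ≤ c)
    (hβ : β ≤ μ.real {z | c ≤ A z * τ + B z + q z}) :
    β * c ≤ (∫ z, |A z| ∂μ) * |τ| + ∫ z, |B z| ∂μ + ∫ z, |q z| ∂μ :=
  calc β * c ≤ c * μ.real {z | c ≤ A z * τ + B z + q z} := by
        rw [mul_comm]; exact mul_le_mul_of_nonneg_left hβ hc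
    _ ≤ ∫ z, |A z * τ + B z + q z| ∂μ :=
        mul_measureReal_le_le_integral_abs (((hA.mul_const τ).add hB).add hq) hc
    _ ≤ _ := integral_abs_mul_add_add_le hA hB hq τ

end Markov

lemma probReal_le_le_one_sub_of_continuousWithinAt {Ω : Type*} [MeasurableSpace Ω]
    {P : Measure Ω} [IsProbabilityMeasure P] {X : Ω → ℝ} (hX : Measurable X) {F : ℝ → ℝ}
    (hF : ∀ v, F v = P.real {ω | X ω ≤ v}) {w : ℝ} (hFw : ContinuousWithinAt F (Set.Iio w) w) :
    P.real {ω | w ≤ X ω} ≤ 1 - F w := by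
  have hleft : ∀ v < w, P.real {ω | w ≤ X ω} ≤ 1 - F v := fun v hv =>
    calc P.real {ω | w ≤ X ω} ≤ P.real {ω | X ω ≤ v}ᶜ :=
          measureReal_mono fun ω hω => not_le.mpr (hv.trans_le hω)
      _ = 1 - F v := by
          rw [probReal_compl_eq_one_sub (measurableSet_le hX measurable_const), hF]
  exact ge_of_tendsto (tendsto_const_nhds.sub hFw)
    (eventually_nhdsWithin_of_forall fun v hv => hleft v hv)

theorem stmt_11_general {Ω Z : Type*} [MeasurableSpace Ω] [MeasurableSpace Z]
    (P : Measure Ω) [IsProbabilityMeasure P] (μZ : Measure Z) [IsProbabilityMeasure μZ]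
    (t : Ω → ℝ) (ht : Measurable t)
    (A B q : Z → ℝ) (hA : Integrable A μZ) (hB : Integrable B μZ) (hq : Integrable q μZ)
    (a b r : ℝ) (ha : a = ∫ z, |A z| ∂μZ) (hb : b = ∫ z, |B z| ∂μZ)
    (hr : r = ∫ z, |q z| ∂μZ) (hapos : 0 < a)
    (c β : ℝ) (hc : 0 < c) :
    P {ω | (μZ {z | A z * t ω + B z + q z ≥ c}).toReal ≥ β} ≤
        P {ω | |t ω| ≥ (β * c - b) / a - r / a} ∧
      ∀ (F : ℝ → ℝ) (α u : ℝ),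
        (∀ v, F v = (P {ω | |t ω| ≤ v}).toReal) → Continuous F →
        StrictMonoOn F (Set.Ici (0 : ℝ)) →
        α = 1 - F ((β * c - b) / a) → α ∈ Set.Ioo (0 : ℝ) 1 →
        0 ≤ u → F u = 1 - α →
        (P {ω | (μZ {z | A z * t ω + B z + q z ≥ c}).toReal ≥ β}).toReal ≤
          1 - F (u - r / a) := by
  have hsub : P {ω | (μZ {z | A z * t ω + B z + q z ≥ c}).toReal ≥ β} ≤
      P {ω | |t ω| ≥ (β * c - b) / a - r / a} := by
    refine measure_mono fun ω hω => ?_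
    have := mul_le_integral_abs_of_le_measureReal hA hB hq hc.le hω
    change (β * c - b) / a - r / a ≤ |t ω|
    rw [← sub_div, div_le_iff₀ hapos]
    subst ha hb hr
    linarith
  refine ⟨hsub, fun F α u hF hFc hFmono hα hαIoo hu hFu => ?_⟩
  set s := (β * c - b) / a
  have hs : 0 ≤ s := by
    by_contra! hneg
    have hempty : {ω | |t ω| ≤ s} = ∅ :=
      Set.eq_empty_of_forall_notMem fun ω hω => hω.out.not_gt (hneg.trans_le (abs_nonneg _))
    rw [hF, hempty, measure_empty, ENNReal.toReal_zero] at hα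
    linarith [hαIoo.2]
  have hus : u = s := hFmono.injOn hu hs (by rw [hFu, hα]; ring)
  calc (P {ω | (μZ {z | A z * t ω + B z + q z ≥ c}).toReal ≥ β}).toReal
      ≤ P.real {ω | u - r / a ≤ |t ω|} := by
        rw [hus]; exact ENNReal.toReal_mono (measure_ne_top _ _) hsub
    _ ≤ 1 - F (u - r / a) :=
        probReal_le_le_one_sub_of_continuousWithinAt ht.abs hF hFc.continuousWithinAt

/-- Lemma 2 (per-example RMIA vulnerability) in explicit form: with `a = ∫|A| > 0`,
`b = ∫|B|`, `r = ∫|q|`,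
`P(μ_Z({z : A(z)·t + B(z) + q(z) ≥ c}) ≥ β) ≤ P(|t| ≥ (β·c − b)/a − r/a)`; moreover if the
CDF `F` of `|t|` is continuous and strictly increasing on `[0,∞)`,
`α = 1 − F((β·c − b)/a) ∈ (0,1)`, and `u ≥ 0` satisfies `F u = 1 − α` (so `u = F⁻¹(1 − α)`),
then the left-hand side is at most `1 − F(u − r/a)`. -/
theorem stmt_11 {Ω Z : Type*} [MeasurableSpace Ω] [MeasurableSpace Z]
    (P : Measure Ω) [IsProbabilityMeasure P] (μZ : Measure Z) [IsProbabilityMeasure μZ]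
    (t : Ω → ℝ) (ht : Measurable t)
    (A B q : Z → ℝ) (hA : Integrable A μZ) (hB : Integrable B μZ) (hq : Integrable q μZ)
    (a b r : ℝ) (ha : a = ∫ z, |A z| ∂μZ) (hb : b = ∫ z, |B z| ∂μZ)
    (hr : r = ∫ z, |q z| ∂μZ) (hapos : 0 < a)
    (c β : ℝ) (hc : 0 < c) (hβ : 0 < β) :
    P {ω | (μZ {z | A z * t ω + B z + q z ≥ c}).toReal ≥ β} ≤
        P {ω | |t ω| ≥ (β * c - b) / a - r / a} ∧
      ∀ (F : ℝ → ℝ) (α u : ℝ),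
        (∀ v, F v = (P {ω | |t ω| ≤ v}).toReal) → Continuous F →
        StrictMonoOn F (Set.Ici (0 : ℝ)) →
        α = 1 - F ((β * c - b) / a) → α ∈ Set.Ioo (0 : ℝ) 1 →
        0 ≤ u → F u = 1 - α →
        (P {ω | (μZ {z | A z * t ω + B z + q z ≥ c}).toReal ≥ β}).toReal ≤
          1 - F (u - r / a) :=
  stmt_11_general P μZ t ht A B q hA hB hq a b r ha hb hr hapos c β hc
end

section
/- Let (Ω, P) be a probability space, let r : Ω → [0,∞) be integrable, and fix γ₀ ∈ ℝ. For S > 0, define the average true positive rate TPR(S) = ∫_Ω Φ(γ₀ + r(ω)/√S) dP(ω). Then √S·( TPR(S) − Φ(γ₀) ) tends to φ(γ₀)·∫_Ω r dP as S → ∞, where φ(u) = (1/√(2π))·e^{−u²/2}. -/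
/-!
The map `t ↦ ∫ Φ(γ₀ + t r) dP` is differentiable at `0` with derivative `φ(γ₀) ∫ r dP`:
one may differentiate under the integral sign because `Φ` is Lipschitz (its density `φ` is
bounded by `1/√(2π)`), so the difference quotients are dominated by the integrable `|r|/√(2π)`.
The theorem reads this derivative along `t = 1/√S`.
-/

open MeasureTheory ProbabilityTheory Filter Topology

/-- `Φ`, the CDF of the standard normal distribution. -/
noncomputable def stdGaussianCDF (x : ℝ) : ℝ :=
  (gaussianReal 0 1 (Set.Iic x)).toReal

theorem hasDerivAt_integral_Iic {E : Type*} [NormedAddCommGroup E] [NormedSpace ℝ E]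
    [CompleteSpace E] {g : ℝ → E} (hg : Integrable g) (hc : Continuous g) (a : ℝ) :
    HasDerivAt (fun x => ∫ t in Set.Iic x, g t) (g a) a := by
  have hsplit : (fun x => ∫ t in Set.Iic x, g t) =
      fun x => (∫ t in Set.Iic a, g t) + ∫ t in a..x, g t := by
    ext x
    rw [← intervalIntegral.integral_Iic_sub_Iic hg.integrableOn hg.integrableOn,
      add_sub_cancel]
  rw [hsplit]
  exact (intervalIntegral.integral_hasDerivAt_right hg.intervalIntegrable
    hc.stronglyMeasurable.stronglyMeasurableAtFilter hc.continuousAt).const_add _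

theorem stdGaussianCDF_eq_integral (x : ℝ) :
    stdGaussianCDF x = ∫ t in Set.Iic x, gaussianPDFReal 0 1 t := by
  rw [stdGaussianCDF, gaussianReal_apply_eq_integral 0 one_ne_zero,
    ENNReal.toReal_ofReal (integral_nonneg fun t => gaussianPDFReal_nonneg 0 1 t)]

theorem gaussianPDFReal_zero_one (x : ℝ) :
    gaussianPDFReal 0 1 x = 1 / √(2 * Real.pi) * Real.exp (-x ^ 2 / 2) := by
  simp [gaussianPDFReal]

theorem hasDerivAt_stdGaussianCDF (x : ℝ) :
    HasDerivAt stdGaussianCDF (gaussianPDFReal 0 1 x) x := by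
  simp_rw [funext stdGaussianCDF_eq_integral]
  exact hasDerivAt_integral_Iic (integrable_gaussianPDFReal 0 1)
    (by rw [gaussianPDFReal_def]; fun_prop) x

theorem gaussianPDFReal_zero_one_le (x : ℝ) : gaussianPDFReal 0 1 x ≤ 1 / √(2 * Real.pi) := by
  rw [gaussianPDFReal_zero_one]
  exact mul_le_of_le_one_right (by positivity)
    (Real.exp_le_one_iff.2 (by nlinarith [sq_nonneg x]))

theorem lipschitzWith_stdGaussianCDF :
    LipschitzWith (1 / √(2 * Real.pi)).toNNReal stdGaussianCDF :=
  lipschitzWith_of_nnnorm_deriv_le (fun x => (hasDerivAt_stdGaussianCDF x).differentiableAt)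
    fun x => by
      rw [(hasDerivAt_stdGaussianCDF x).deriv, ← NNReal.coe_le_coe, coe_nnnorm,
        Real.coe_toNNReal _ (by positivity), Real.norm_of_nonneg (gaussianPDFReal_nonneg 0 1 x)]
      exact gaussianPDFReal_zero_one_le x

theorem hasDerivAt_integral_comp_add_mul {Ω E : Type*} [MeasurableSpace Ω] {P : Measure Ω}
    [IsFiniteMeasure P] [NormedAddCommGroup E] [NormedSpace ℝ E] [CompleteSpace E]
    {f : ℝ → E} {K : NNReal} (hf : LipschitzWith K f) {f' : E} {a : ℝ} (hf' : HasDerivAt f f' a)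
    {r : Ω → ℝ} (hr : Integrable r P) :
    HasDerivAt (fun t => ∫ ω, f (a + t * r ω) ∂P) ((∫ ω, r ω ∂P) • f') 0 := by
  have hmeas (t : ℝ) : AEStronglyMeasurable (fun ω => f (a + t * r ω)) P :=
    hf.continuous.comp_aestronglyMeasurable
      ((hr.aemeasurable.const_mul t).const_add a).aestronglyMeasurable
  have hlip (ω : Ω) :
      LipschitzOnWith (Real.nnabs (K * r ω)) (fun t => f (a + t * r ω)) Set.univ := by
    refine (LipschitzWith.of_dist_le_mul fun t s => ?_).lipschitzOnWith
    calc dist (f (a + t * r ω)) (f (a + s * r ω)) ≤ K * dist (a + t * r ω) (a + s * r ω) :=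
          hf.dist_le_mul _ _
      _ = Real.nnabs (K * r ω) * dist t s := by
          rw [Real.coe_nnabs, Real.dist_eq, Real.dist_eq, add_sub_add_left_eq_sub, ← sub_mul,
            abs_mul, abs_mul, NNReal.abs_eq]
          ring
  have hderiv (ω : Ω) : HasDerivAt (fun t => f (a + t * r ω)) (r ω • f') 0 :=
    hf'.scomp_of_eq 0 ((hasDerivAt_mul_const (r ω)).const_add a) (by simp)
  rw [← integral_smul_const]
  exact (hasDerivAt_integral_of_dominated_loc_of_lip Filter.univ_mem (.of_forall hmeas)
    (by simp) (hr.aestronglyMeasurable.smul_const f')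
    (.of_forall hlip) (hr.const_mul K) (.of_forall hderiv)).2

theorem HasDerivAt.tendsto_smul_sub_inv {E : Type*} [NormedAddCommGroup E] [NormedSpace ℝ E]
    {g : ℝ → E} {L : E} (hg : HasDerivAt g L 0) :
    Tendsto (fun x : ℝ => x • (g x⁻¹ - g 0)) atTop (𝓝 L) := by
  refine (hg.tendsto_slope.comp (tendsto_inv_atTop_nhdsGT_zero.mono_right
    (nhdsWithin_mono _ fun x hx => ne_of_gt hx))).congr fun x => ?_
  simp [slope_def_module]

theorem stmt_13_general {Ω : Type*} [MeasurableSpace Ω] (P : Measure Ω) [IsProbabilityMeasure P]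
    (r : Ω → ℝ) (hint : Integrable r P) (γ₀ : ℝ) :
    Filter.Tendsto
      (fun S : ℝ =>
        Real.sqrt S *
          ((∫ ω, stdGaussianCDF (γ₀ + r ω / Real.sqrt S) ∂P) - stdGaussianCDF γ₀))
      Filter.atTop
      (nhds ((1 / Real.sqrt (2 * Real.pi)) * Real.exp (-γ₀ ^ 2 / 2) * ∫ ω, r ω ∂P)) := by
  have hTPR := (hasDerivAt_integral_comp_add_mul lipschitzWith_stdGaussianCDF
    (hasDerivAt_stdGaussianCDF γ₀) hint).tendsto_smul_sub_inv.comp Real.tendsto_sqrt_atTop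
  rw [smul_eq_mul, mul_comm, gaussianPDFReal_zero_one] at hTPR
  refine hTPR.congr fun S => ?_
  simp [div_eq_inv_mul]

/-- Corollary 1 (average-case LiRA power-law), precise form: with
`TPR(S) = ∫ Φ(γ₀ + r(ω)/√S) dP(ω)` for integrable `r ≥ 0`,
`√S·(TPR(S) − Φ(γ₀)) → φ(γ₀)·∫ r dP` where `φ(u) = (1/√(2π))·e^{−u²/2}`. -/
theorem stmt_13 {Ω : Type*} [MeasurableSpace Ω] (P : Measure Ω) [IsProbabilityMeasure P]
    (r : Ω → ℝ) (hr : ∀ ω, 0 ≤ r ω) (hint : Integrable r P) (γ₀ : ℝ) :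
    Filter.Tendsto
      (fun S : ℝ =>
        Real.sqrt S *
          ((∫ ω, stdGaussianCDF (γ₀ + r ω / Real.sqrt S) ∂P) - stdGaussianCDF γ₀))
      Filter.atTop
      (nhds ((1 / Real.sqrt (2 * Real.pi)) * Real.exp (-γ₀ ^ 2 / 2) * ∫ ω, r ω ∂P)) :=
  stmt_13_general P r hint γ₀
end
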